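/- arXiv:1311.5274 — 5 statements merged into one kernel-verified Lean document; each statement's English description precedes it below -/
import Mathlib

section
/- Under the orthogonal sparsity model with λₙ → ∞, the truncated second-moment estimator σ̃²ₙ = (1/n)·Σᵢ₌₁ⁿ min{Yᵢ², λₙ²} satisfies E[σ̃²ₙ] → σ². -/
open MeasureTheory ProbabilityTheory Filter Finset

/-- The orthogonal sparsity model: for sample size `n`, the joint law on `Fin n → ℝ`
of independent Gaussians `Yᵢ ~ N(βᵢ, σ²)`, where `βᵢ = β` for the first `⌈n^α⌉`
indices and `βᵢ = 0` otherwise. -/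
noncomputable def orthoModel (β σ α : ℝ) (n : ℕ) : Measure (Fin n → ℝ) :=
  Measure.pi fun i =>
    gaussianReal (if (i : ℕ) < ⌈(n : ℝ)^α⌉₊ then β else 0) ⟨σ^2, sq_nonneg σ⟩

/-!
Taking expectations coordinatewise, `E σ̃²ₙ` is the average over `i` of the truncated second
moments `E min(Yᵢ², λₙ²)`. The `⌈n^α⌉` signal coordinates contribute at most `β² + σ²` each and
make up a vanishing fraction of the coordinates since `α < 1`; each of the remaining ones
contributes `E min(Z², λₙ²)` with `Z ~ N(0, σ²)`, which tends to `E Z² = σ²` by dominated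
convergence.
-/

open Topology
open scoped NNReal

theorem Fin.sum_ite_val_lt {M : Type*} [AddCommMonoid M] {n K : ℕ} (hK : K ≤ n) (a b : M) :
    ∑ i : Fin n, (if (i : ℕ) < K then a else b) = K • a + (n - K) • b := by
  have hcard :=
    Finset.card_filter_add_card_filter_not (s := Finset.univ) (fun i : Fin n => (i : ℕ) < K)
  rw [Fin.card_filter_val_lt, min_eq_right hK, Finset.card_univ, Fintype.card_fin] at hcard
  rw [Finset.sum_ite, Finset.sum_const, Finset.sum_const, Fin.card_filter_val_lt,
    min_eq_right hK]
  congr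
  omega

theorem natCeil_rpow_le_self {α : ℝ} (hα : α ≤ 1) {n : ℕ} (hn : 1 ≤ n) :
    ⌈(n : ℝ) ^ α⌉₊ ≤ n :=
  Nat.ceil_le.mpr <| Real.rpow_le_self_of_one_le (by exact_mod_cast hn) hα

theorem tendsto_natCeil_rpow_div_atTop {α : ℝ} (hα : α < 1) :
    Tendsto (fun n : ℕ => (⌈(n : ℝ) ^ α⌉₊ : ℝ) / n) atTop (𝓝 0) := by
  have hbound : Tendsto (fun n : ℕ => (n : ℝ) ^ (α - 1) + (n : ℝ)⁻¹) atTop (𝓝 0) := by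
    have hpow := (tendsto_rpow_neg_atTop (sub_pos.mpr hα)).comp tendsto_natCast_atTop_atTop
    simpa [neg_sub, Function.comp_def] using
      hpow.add (tendsto_inv_atTop_zero.comp tendsto_natCast_atTop_atTop)
  refine tendsto_of_tendsto_of_tendsto_of_le_of_le' tendsto_const_nhds hbound
    (Eventually.of_forall fun n => by positivity) ?_
  filter_upwards [eventually_gt_atTop 0] with n hn
  have hn_pos : (0 : ℝ) < n := by exact_mod_cast hn
  calc (⌈(n : ℝ) ^ α⌉₊ : ℝ) / n ≤ ((n : ℝ) ^ α + 1) / n := by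
        gcongr; exact (Nat.ceil_lt_add_one (by positivity)).le
    _ = (n : ℝ) ^ (α - 1) + (n : ℝ)⁻¹ := by
        rw [Real.rpow_sub hn_pos, Real.rpow_one]; ring

theorem integrable_sq_gaussianReal (m : ℝ) (v : ℝ≥0) :
    Integrable (fun x => x ^ 2) (gaussianReal m v) :=
  (memLp_id_gaussianReal 2).integrable_sq

theorem integral_sq_gaussianReal (m : ℝ) (v : ℝ≥0) :
    ∫ x, x ^ 2 ∂gaussianReal m v = m ^ 2 + v := by
  have h := variance_eq_sub (memLp_id_gaussianReal (μ := m) (v := v) 2)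
  simp only [variance_id_gaussianReal, Pi.pow_apply, id, integral_id_gaussianReal] at h
  linarith

noncomputable def truncatedSecondMoment (μ : Measure ℝ) (t : ℝ) : ℝ :=
  ∫ x, min (x ^ 2) (t ^ 2) ∂μ

section TruncatedSecondMoment

variable {μ : Measure ℝ}

theorem integrable_min_sq [IsFiniteMeasure μ] (t : ℝ) :
    Integrable (fun x => min (x ^ 2) (t ^ 2)) μ := by
  refine Integrable.of_bound (by fun_prop : Measurable _).aestronglyMeasurable (t ^ 2)
    (Eventually.of_forall fun x => ?_)
  rw [Real.norm_of_nonneg (le_min (sq_nonneg _) (sq_nonneg _))]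
  exact min_le_right _ _

theorem truncatedSecondMoment_nonneg (t : ℝ) : 0 ≤ truncatedSecondMoment μ t :=
  integral_nonneg fun _ => le_min (sq_nonneg _) (sq_nonneg _)

theorem truncatedSecondMoment_le_integral_sq (h : Integrable (fun x => x ^ 2) μ) (t : ℝ) :
    truncatedSecondMoment μ t ≤ ∫ x, x ^ 2 ∂μ :=
  integral_mono_of_nonneg (Eventually.of_forall fun _ => le_min (sq_nonneg _) (sq_nonneg _)) h
    (Eventually.of_forall fun _ => min_le_left _ _)

theorem tendsto_truncatedSecondMoment {ι : Type*} {l : Filter ι} [l.IsCountablyGenerated]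
    {lam : ι → ℝ} (hlam : Tendsto lam l atTop) (h : Integrable (fun x => x ^ 2) μ) :
    Tendsto (fun i => truncatedSecondMoment μ (lam i)) l (𝓝 (∫ x, x ^ 2 ∂μ)) := by
  refine tendsto_integral_filter_of_dominated_convergence (fun x => x ^ 2)
    (Eventually.of_forall fun i => (by fun_prop : Measurable _).aestronglyMeasurable)
    (Eventually.of_forall fun i => Eventually.of_forall fun x => ?_) h
    (Eventually.of_forall fun x => tendsto_const_nhds.congr' ?_)
  · rw [Real.norm_of_nonneg (le_min (sq_nonneg _) (sq_nonneg _))]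
    exact min_le_left _ _
  · filter_upwards [hlam.eventually_ge_atTop |x|] with i hi
    exact (min_eq_left (sq_le_sq.mpr (hi.trans (le_abs_self _)))).symm

end TruncatedSecondMoment

theorem truncatedSecondMoment_gaussianReal_le (m : ℝ) (v : ℝ≥0) (t : ℝ) :
    truncatedSecondMoment (gaussianReal m v) t ≤ m ^ 2 + v :=
  integral_sq_gaussianReal m v ▸
    truncatedSecondMoment_le_integral_sq (integrable_sq_gaussianReal m v) t

theorem integral_sum_comp_eval {ι X : Type*} [Fintype ι] [MeasurableSpace X]
    {μ : ι → Measure X} [∀ i, IsProbabilityMeasure (μ i)] {f : X → ℝ}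
    (hf : ∀ i, Integrable f (μ i)) :
    ∫ y, ∑ i, f (y i) ∂Measure.pi μ = ∑ i, ∫ x, f x ∂μ i := by
  rw [integral_finsetSum _ fun i _ => integrable_comp_eval (X := fun _ => X) (hf i)]
  exact Finset.sum_congr rfl fun i _ => integral_comp_eval (X := fun _ => X) (hf i).1

theorem integral_orthoModel_truncated_mean (β σ α t : ℝ) {n : ℕ} (hn : 0 < n)
    (hK : ⌈(n : ℝ) ^ α⌉₊ ≤ n) :
    ∫ y, (1 / (n : ℝ)) * ∑ i : Fin n, min ((y i) ^ 2) (t ^ 2) ∂(orthoModel β σ α n)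
      = (⌈(n : ℝ) ^ α⌉₊ / n) * truncatedSecondMoment (gaussianReal β ⟨σ ^ 2, sq_nonneg σ⟩) t
        + (1 - ⌈(n : ℝ) ^ α⌉₊ / n)
          * truncatedSecondMoment (gaussianReal 0 ⟨σ ^ 2, sq_nonneg σ⟩) t := by
  set v : ℝ≥0 := ⟨σ ^ 2, sq_nonneg σ⟩
  set K := ⌈(n : ℝ) ^ α⌉₊
  have hmodel : orthoModel β σ α n
      = Measure.pi fun i : Fin n => gaussianReal (if (i : ℕ) < K then β else 0) v := rfl
  rw [integral_const_mul, hmodel,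
    integral_sum_comp_eval (f := fun x => min (x ^ 2) (t ^ 2)) fun i => integrable_min_sq t]
  simp_rw [apply_ite (fun m => ∫ x, min (x ^ 2) (t ^ 2) ∂gaussianReal m v)]
  rw [Fin.sum_ite_val_lt hK, nsmul_eq_mul, nsmul_eq_mul, Nat.cast_sub hK]
  simp only [truncatedSecondMoment]
  field_simp

theorem truncated_second_moment_expectation_tendsto_general
    (β σ α : ℝ) (hα1 : α < 1)
    (lam : ℕ → ℝ) (hlam : Tendsto lam atTop atTop) :
    Tendsto
      (fun n => ∫ y, (1 / (n : ℝ)) * ∑ i : Fin n,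
        min ((y i)^2) ((lam n)^2) ∂(orthoModel β σ α n))
      atTop (nhds (σ^2)) := by
  set v : ℝ≥0 := ⟨σ ^ 2, sq_nonneg σ⟩
  have hfrac := tendsto_natCeil_rpow_div_atTop hα1
  have hsignal := hfrac.zero_mul_isBoundedUnder_le
    (g := fun n => truncatedSecondMoment (gaussianReal β v) (lam n)) <|
    isBoundedUnder_of ⟨β ^ 2 + v, fun n => by
      rw [Function.comp_apply, Real.norm_of_nonneg (truncatedSecondMoment_nonneg _)]
      exact truncatedSecondMoment_gaussianReal_le β v _⟩
  have hnoise := (tendsto_const_nhds (x := (1 : ℝ)).sub hfrac).mul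
    (tendsto_truncatedSecondMoment hlam (integrable_sq_gaussianReal 0 v))
  have hlimit : 0 + (1 - 0) * ∫ x, x ^ 2 ∂gaussianReal 0 v = σ ^ 2 := by
    rw [integral_sq_gaussianReal, show (v : ℝ) = σ ^ 2 from rfl]
    ring
  refine (hlimit ▸ hsignal.add hnoise).congr' ?_
  filter_upwards [eventually_gt_atTop 0] with n hn
  exact (integral_orthoModel_truncated_mean β σ α (lam n) hn
    (natCeil_rpow_le_self hα1.le hn)).symm

/-- Under the orthogonal sparsity model with `λₙ → ∞`, the truncated second-moment
estimator `σ̃²ₙ = (1/n) Σᵢ min{Yᵢ², λₙ²}` satisfies `E[σ̃²ₙ] → σ²`. -/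
theorem truncated_second_moment_expectation_tendsto
    (β σ α : ℝ) (hσ : 0 < σ) (hα0 : 0 ≤ α) (hα1 : α < 1)
    (lam : ℕ → ℝ) (hlam : Tendsto lam atTop atTop) :
    Tendsto
      (fun n => ∫ y, (1 / (n : ℝ)) * ∑ i : Fin n,
        min ((y i)^2) ((lam n)^2) ∂(orthoModel β σ α n))
      atTop (nhds (σ^2)) :=
  truncated_second_moment_expectation_tendsto_general β σ α hα1 lam hlam
end

section
/- For Y ~ N(β, σ²) and threshold λ ≥ 0, the soft-thresholding risk satisfies the Stein identity r_S(λ, β) = E[σ² − 2σ²·1{|Y| ≤ λ} + min{Y², λ²}], where r_S(λ, β) = E[(S(Y, λ) − β)²]. -/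
/-!
Write `S(y, λ) = y - clip_λ(y)`, where `clip_λ` is the projection onto `[-λ, λ]`. Then
`(S(Y) - β)² = (Y - β)² - 2 (Y - β) clip_λ(Y) + min(Y², λ²)`, and `E (Y - β)² = σ²`.
The cross term is handled by Stein's lemma `E[(Y - β) h(Y)] = σ² E[h'(Y)]`, which follows from
`(y - β) φ(y) = -σ² φ'(y)` for the Gaussian density `φ` by integrating `(h φ)'` over the
line; for `h = clip_λ` this needs the fundamental theorem of calculus off the two kinks `±λ`,
where `h' = 1{|y| ≤ λ}`.
-/

open MeasureTheory ProbabilityTheory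

/-- Soft thresholding operator. -/
noncomputable def softThresh (y lam : ℝ) : ℝ := Real.sign y * max (|y| - lam) 0

open Filter Topology Set
open scoped NNReal

namespace MeasureTheory

theorem integral_of_hasDerivAt_off_countable_of_tendsto {E : Type*} [NormedAddCommGroup E]
    [NormedSpace ℝ E] [CompleteSpace E] {f f' : ℝ → E} {s : Set ℝ} {m n : E}
    (hs : s.Countable) (hf : Continuous f) (hderiv : ∀ x ∉ s, HasDerivAt f (f' x) x)
    (hf' : Integrable f') (hbot : Tendsto f atBot (𝓝 m)) (htop : Tendsto f atTop (𝓝 n)) :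
    ∫ x, f' x = n - m := by
  refine tendsto_nhds_unique
    (intervalIntegral_tendsto_integral hf' tendsto_neg_atTop_atBot tendsto_id) ?_
  refine (htop.sub (hbot.comp tendsto_neg_atTop_atBot)).congr fun R => ?_
  exact (integral_eq_of_hasDerivAt_off_countable f f' hs hf.continuousOn
    (fun x hx => hderiv x hx.2) hf'.intervalIntegrable).symm

end MeasureTheory

namespace ProbabilityTheory

variable {μ : ℝ} {v : ℝ≥0}

lemma hasDerivAt_gaussianPDFReal (μ : ℝ) (v : ℝ≥0) (x : ℝ) :
    HasDerivAt (gaussianPDFReal μ v) (-((x - μ) / v) * gaussianPDFReal μ v x) x := by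
  have hexponent : HasDerivAt (fun y => -(y - μ) ^ 2 / (2 * v)) (-((x - μ) / v)) x :=
    ((((hasDerivAt_id' x).sub_const μ).pow 2).neg.div_const (2 * (v : ℝ))).congr_deriv
      (by push_cast; ring)
  refine (hexponent.exp.const_mul (√(2 * Real.pi * v))⁻¹).congr_deriv ?_
  rw [gaussianPDFReal]
  ring

lemma continuous_gaussianPDFReal (μ : ℝ) (v : ℝ≥0) : Continuous (gaussianPDFReal μ v) :=
  continuous_iff_continuousAt.2 fun x => (hasDerivAt_gaussianPDFReal μ v x).continuousAt

lemma integrable_gaussianReal_iff {E : Type*} [NormedAddCommGroup E] [NormedSpace ℝ E]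
    (hv : v ≠ 0) {g : ℝ → E} :
    Integrable g (gaussianReal μ v) ↔ Integrable fun x => gaussianPDFReal μ v x • g x := by
  rw [gaussianReal_of_var_ne_zero _ hv, integrable_withDensity_iff_integrable_smul'
    (measurable_gaussianPDF _ _) (ae_of_all _ fun _ => gaussianPDF_lt_top)]
  simp only [toReal_gaussianPDF]

lemma memLp_sub_gaussianReal (μ : ℝ) (v : ℝ≥0) (p : ℝ≥0) :
    MemLp (fun x => x - μ) p (gaussianReal μ v) :=
  (memLp_id_gaussianReal p).sub (memLp_const μ)

lemma integral_sub_sq_gaussianReal (μ : ℝ) (v : ℝ≥0) :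
    ∫ x, (x - μ) ^ 2 ∂gaussianReal μ v = v := by
  rw [← variance_fun_id_gaussianReal (μ := μ), variance_eq_integral aemeasurable_id',
    integral_id_gaussianReal]

lemma tendsto_gaussianPDFReal_cocompact (hv : v ≠ 0) :
    Tendsto (gaussianPDFReal μ v) (cocompact ℝ) (𝓝 0) := by
  have hderiv : Integrable fun x => -((x - μ) / v) * gaussianPDFReal μ v x := by
    have := ((memLp_sub_gaussianReal μ v 1).integrable le_rfl).div_const (v : ℝ) |>.neg
    simpa [integrable_gaussianReal_iff hv, mul_comm] using this
  rw [cocompact_eq_atBot_atTop, tendsto_sup]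
  exact ⟨tendsto_zero_of_hasDerivAt_of_integrableOn_Iic (a := 0)
      (fun x _ => hasDerivAt_gaussianPDFReal μ v x) hderiv.integrableOn
      (integrable_gaussianPDFReal μ v).integrableOn,
    tendsto_zero_of_hasDerivAt_of_integrableOn_Ioi (a := 0)
      (fun x _ => hasDerivAt_gaussianPDFReal μ v x) hderiv.integrableOn
      (integrable_gaussianPDFReal μ v).integrableOn⟩

theorem integral_sub_mul_gaussianReal_eq_var_mul_integral_deriv (hv : v ≠ 0)
    {h h' : ℝ → ℝ} {s : Set ℝ} (hs : s.Countable) (hc : Continuous h)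
    (hd : ∀ x ∉ s, HasDerivAt h (h' x) x)
    (hbdd : ∃ C, ∀ x, |h x| ≤ C) (hint : Integrable h' (gaussianReal μ v)) :
    ∫ x, (x - μ) * h x ∂gaussianReal μ v = v * ∫ x, h' x ∂gaussianReal μ v := by
  obtain ⟨C, hC⟩ := hbdd
  have hmul : Integrable (fun x => (x - μ) * h x) (gaussianReal μ v) :=
    ((memLp_sub_gaussianReal μ v 1).integrable le_rfl).mul_bdd hc.aestronglyMeasurable
      (ae_of_all _ hC)
  rw [integrable_gaussianReal_iff hv] at hmul hint
  have hlim : Tendsto (fun x => h x * gaussianPDFReal μ v x) (cocompact ℝ) (𝓝 0) :=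
    isBoundedUnder_le_mul_tendsto_zero (isBoundedUnder_of ⟨C, hC⟩)
      (tendsto_gaussianPDFReal_cocompact hv)
  have hparts := integral_of_hasDerivAt_off_countable_of_tendsto
    (f' := fun x => gaussianPDFReal μ v x • h' x
      - (v : ℝ)⁻¹ * (gaussianPDFReal μ v x • ((x - μ) * h x)))
    hs (hc.mul (continuous_gaussianPDFReal μ v))
    (fun x hx => ((hd x hx).mul (hasDerivAt_gaussianPDFReal μ v x)).congr_deriv (by
      simp only [smul_eq_mul]; ring))
    (hint.sub (hmul.const_mul _)) (hlim.mono_left atBot_le_cocompact)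
    (hlim.mono_left atTop_le_cocompact)
  rw [integral_sub hint (hmul.const_mul _), integral_const_mul, sub_zero, sub_eq_zero] at hparts
  rw [integral_gaussianReal_eq_integral_smul hv, integral_gaussianReal_eq_integral_smul hv, hparts]
  have : (v : ℝ) ≠ 0 := by exact_mod_cast hv
  field_simp

end ProbabilityTheory

def clip (lam y : ℝ) : ℝ := max (-lam) (min y lam)

lemma continuous_clip (lam : ℝ) : Continuous (clip lam) :=
  continuous_const.max (continuous_id.min continuous_const)

lemma abs_clip_le (lam y : ℝ) : |clip lam y| ≤ |lam| :=
  abs_le.2 ⟨(neg_le_neg (le_abs_self lam)).trans (le_max_left _ _),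
    max_le (neg_le_abs lam) ((min_le_right _ _).trans (le_abs_self lam))⟩

lemma clip_sq {lam : ℝ} (hlam : 0 ≤ lam) (y : ℝ) :
    clip lam y ^ 2 = min (y ^ 2) (lam ^ 2) := by
  rcases le_total y (-lam) with hy | hy
  · rw [clip, min_eq_left (by linarith), max_eq_left hy, neg_sq, min_eq_right]
    nlinarith
  rcases le_total y lam with hy' | hy'
  · rw [clip, min_eq_left hy', max_eq_right hy, min_eq_left (sq_le_sq' hy hy')]
  · rw [clip, min_eq_right hy', max_eq_right (by linarith), min_eq_right]
    nlinarith

lemma softThresh_eq_sub_clip {lam : ℝ} (hlam : 0 ≤ lam) (y : ℝ) :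
    softThresh y lam = y - clip lam y := by
  rcases lt_trichotomy y 0 with hy | rfl | hy
  · rw [softThresh, clip, Real.sign_of_neg hy, abs_of_neg hy, min_eq_left (by linarith)]
    rcases le_total y (-lam) with h | h
    · rw [max_eq_left (by linarith), max_eq_left h]; ring
    · rw [max_eq_right (by linarith), max_eq_right h]; ring
  · simp [softThresh, clip, hlam]
  · rw [softThresh, clip, Real.sign_of_pos hy, abs_of_pos hy]
    rcases le_total y lam with h | h
    · rw [max_eq_right (by linarith), min_eq_left h, max_eq_right (by linarith)]; ring
    · rw [max_eq_left (by linarith), min_eq_right h, max_eq_right (by linarith)]; ring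

lemma hasDerivAt_clip {lam x : ℝ} (hx : x ∉ ({-lam, lam} : Set ℝ)) :
    HasDerivAt (clip lam) (if |x| ≤ lam then 1 else 0) x := by
  simp only [mem_insert_iff, mem_singleton_iff, not_or] at hx
  rcases lt_or_gt_of_ne hx.2 with hlt | hgt
  · rcases lt_or_gt_of_ne hx.1 with hlow | hmid
    · rw [if_neg (by rw [abs_le]; exact fun h => absurd h.1 (not_le.2 hlow))]
      refine (hasDerivAt_const x (-lam)).congr_of_eventuallyEq ?_
      filter_upwards [eventually_lt_nhds hlow] with y hy
      exact max_eq_left ((min_le_left y lam).trans hy.le)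
    · rw [if_pos (abs_le.2 ⟨hmid.le, hlt.le⟩)]
      refine (hasDerivAt_id x).congr_of_eventuallyEq ?_
      filter_upwards [eventually_gt_nhds hmid, eventually_lt_nhds hlt] with y hlow hhigh
      rw [clip, min_eq_left hhigh.le, max_eq_right hlow.le, id]
  · rw [if_neg (not_le.2 (hgt.trans_le (le_abs_self x)))]
    refine (hasDerivAt_const x (max (-lam) lam)).congr_of_eventuallyEq ?_
    filter_upwards [eventually_gt_nhds hgt] with y hy
    rw [clip, min_eq_right hy.le]

lemma integrable_ite_abs_le {μ : Measure ℝ} [IsFiniteMeasure μ] (lam : ℝ) :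
    Integrable (fun y : ℝ => if |y| ≤ lam then (1 : ℝ) else 0) μ :=
  .of_bound (Measurable.ite (measurableSet_le continuous_abs.measurable measurable_const)
    measurable_const measurable_const).aestronglyMeasurable 1
    (ae_of_all _ fun y => by split_ifs <;> simp)

lemma integral_sub_mul_clip_gaussianReal {μ : ℝ} {v : ℝ≥0} (hv : v ≠ 0) (lam : ℝ) :
    ∫ y, (y - μ) * clip lam y ∂gaussianReal μ v
      = v * ∫ y, (if |y| ≤ lam then (1 : ℝ) else 0) ∂gaussianReal μ v :=
  integral_sub_mul_gaussianReal_eq_var_mul_integral_deriv hv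
    ((countable_singleton lam).insert (-lam)) (continuous_clip lam)
    (fun _ hx => hasDerivAt_clip hx) ⟨|lam|, abs_clip_le lam⟩ (integrable_ite_abs_le lam)

theorem integral_softThresh_sub_sq_gaussianReal {μ lam : ℝ} {v : ℝ≥0} (hv : v ≠ 0)
    (hlam : 0 ≤ lam) :
    ∫ y, (softThresh y lam - μ) ^ 2 ∂gaussianReal μ v
      = ∫ y, ((v : ℝ) - 2 * v * (if |y| ≤ lam then (1 : ℝ) else 0) + min (y ^ 2) (lam ^ 2))
          ∂gaussianReal μ v := by
  have hmin : Integrable (fun y : ℝ => min (y ^ 2) (lam ^ 2)) (gaussianReal μ v) :=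
    .of_bound (by fun_prop) (lam ^ 2) (ae_of_all _ fun y => by
      rw [Real.norm_of_nonneg (by positivity)]; exact min_le_right _ _)
  have hind := integrable_ite_abs_le (μ := gaussianReal μ v) lam
  have hsq := (memLp_sub_gaussianReal μ v 2).integrable_sq
  have hcross : Integrable (fun y => (y - μ) * clip lam y) (gaussianReal μ v) :=
    ((memLp_sub_gaussianReal μ v 1).integrable le_rfl).mul_bdd
      (continuous_clip lam).aestronglyMeasurable (ae_of_all _ (abs_clip_le lam))
  have hexpand : ∀ y, (softThresh y lam - μ) ^ 2
      = (y - μ) ^ 2 - 2 * ((y - μ) * clip lam y) + min (y ^ 2) (lam ^ 2) := fun y => by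
    rw [softThresh_eq_sub_clip hlam, ← clip_sq hlam]; ring
  have hlhs : Integrable (fun y => (y - μ) ^ 2 - 2 * ((y - μ) * clip lam y))
      (gaussianReal μ v) :=
    hsq.sub (hcross.const_mul 2)
  have hrhs : Integrable (fun y => (v : ℝ) - 2 * v * (if |y| ≤ lam then (1 : ℝ) else 0))
      (gaussianReal μ v) :=
    (integrable_const _).sub (hind.const_mul _)
  simp_rw [hexpand]
  rw [integral_add hlhs hmin, integral_add hrhs hmin,
    integral_sub hsq (hcross.const_mul 2), integral_sub (integrable_const _) (hind.const_mul _),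
    integral_const_mul, integral_const_mul, integral_sub_sq_gaussianReal,
    integral_sub_mul_clip_gaussianReal hv, integral_const]
  simp only [probReal_univ, smul_eq_mul, one_mul]
  ring

/-- Stein identity for the soft-thresholding risk: for `Y ~ N(β, σ²)` and `λ ≥ 0`,
`r_S(λ, β) = E[σ² − 2σ²·1{|Y| ≤ λ} + min{Y², λ²}]`. -/
theorem softRisk_stein_identity (β σ lam : ℝ) (hσ : 0 < σ) (hlam : 0 ≤ lam) :
    ∫ y, (softThresh y lam - β)^2 ∂(gaussianReal β ⟨σ^2, sq_nonneg σ⟩)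
      = ∫ y, (σ^2 - 2 * σ^2 * (if |y| ≤ lam then (1 : ℝ) else 0)
          + min (y^2) (lam^2)) ∂(gaussianReal β ⟨σ^2, sq_nonneg σ⟩) :=
  integral_softThresh_sub_sq_gaussianReal
    (fun h => (pow_pos hσ 2).ne' (congrArg NNReal.toReal h)) hlam
end

section
/- For Y ~ N(β, σ²) and λ ≥ 0, E[min{Y², λ²}] − σ² ≤ r_S(λ, β), where r_S(λ, β) = E[(S(Y, λ) − β)²] is the soft-thresholding risk. -/
open MeasureTheory ProbabilityTheory

/-!
Write `clip λ y = max (-λ) (min y λ)` for the projection onto `[-λ, λ]`, so that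
`S(y, λ) = y - clip λ y` and `(clip λ y)² = min {y², λ²}`. With `X = Y - β`, expanding the square
gives `r_S = Var Y + E[min {Y², λ²}] - 2 E[X · clip λ Y]`. Since `E[X] = 0`, the last expectation
equals `E[X · (clip λ Y - clip λ β)]`, and this is at most `E[X²] = Var Y` because `clip λ` is
monotone and 1-Lipschitz. Only the mean and the variance of the Gaussian law are used.
-/

namespace SoftThresholding

def clip (lam y : ℝ) : ℝ := max (-lam) (min y lam)

theorem continuous_clip (lam : ℝ) : Continuous (clip lam) := by
  unfold clip; fun_prop

theorem abs_clip_le {lam : ℝ} (hlam : 0 ≤ lam) (y : ℝ) : |clip lam y| ≤ lam :=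
  abs_le.2 ⟨le_max_left _ _, max_le (by linarith) (min_le_right _ _)⟩

theorem clip_sq {lam : ℝ} (hlam : 0 ≤ lam) (y : ℝ) : clip lam y ^ 2 = min (y ^ 2) (lam ^ 2) := by
  simp only [clip, min_def, max_def]
  split_ifs <;> nlinarith

theorem clip_sub_clip_mul_le (lam a b : ℝ) :
    (clip lam a - clip lam b) * (a - b) ≤ (a - b) ^ 2 := by
  simp only [clip, min_def, max_def]
  split_ifs <;> nlinarith

theorem softThresh_eq_sub_clip {lam : ℝ} (hlam : 0 ≤ lam) (y : ℝ) :
    softThresh y lam = y - clip lam y := by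
  rcases lt_trichotomy y 0 with hy | rfl | hy
  · rw [softThresh, Real.sign_of_neg hy, abs_of_neg hy, clip]
    simp only [min_def, max_def]
    split_ifs <;> linarith
  · simp [softThresh, clip, hlam]
  · rw [softThresh, Real.sign_of_pos hy, abs_of_pos hy, clip]
    simp only [min_def, max_def]
    split_ifs <;> linarith

theorem min_sq_sub_sq_sub_le_sq_softThresh_sub {lam : ℝ} (hlam : 0 ≤ lam) (β y : ℝ) :
    min (y ^ 2) (lam ^ 2) - (y - β) ^ 2 - 2 * clip lam β * (y - β)
      ≤ (softThresh y lam - β) ^ 2 := by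
  rw [softThresh_eq_sub_clip hlam, ← clip_sq hlam]
  linear_combination 2 * clip_sub_clip_mul_le lam y β

theorem integral_min_sq_sub_variance_le_integral_sq_softThresh_sub {μ : Measure ℝ}
    [IsProbabilityMeasure μ] (hμ : MemLp (fun y => y) 2 μ) {lam : ℝ} (hlam : 0 ≤ lam) :
    (∫ y, min (y ^ 2) (lam ^ 2) ∂μ) - Var[fun y => y; μ]
      ≤ ∫ y, (softThresh y lam - ∫ y, y ∂μ) ^ 2 ∂μ := by
  set m := ∫ y, y ∂μ
  have hX : MemLp (fun y => y - m) 2 μ := hμ.sub (memLp_const m)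
  have hclip : MemLp (clip lam) 2 μ :=
    .of_bound (continuous_clip lam).aestronglyMeasurable lam (ae_of_all _ (abs_clip_le hlam))
  have hmean : ∫ y, (y - m) ∂μ = 0 := by
    rw [integral_sub (hμ.integrable one_le_two) (integrable_const m)]
    simp [m]
  have hmin : Integrable (fun y => min (y ^ 2) (lam ^ 2)) μ := by
    simpa only [clip_sq hlam] using hclip.integrable_sq
  have hS : Integrable (fun y => (softThresh y lam - m) ^ 2) μ := by
    simpa only [Pi.sub_apply, softThresh_eq_sub_clip hlam, sub_right_comm] using
      (hX.sub hclip).integrable_sq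
  have hsq : Integrable (fun y => (y - m) ^ 2) μ := hX.integrable_sq
  have hlin : Integrable (fun y => 2 * clip lam m * (y - m)) μ :=
    (hX.integrable one_le_two).const_mul _
  have hdiff : Integrable (fun y => min (y ^ 2) (lam ^ 2) - (y - m) ^ 2) μ := hmin.sub hsq
  rw [variance_eq_integral measurable_id'.aemeasurable]
  calc (∫ y, min (y ^ 2) (lam ^ 2) ∂μ) - ∫ y, (y - m) ^ 2 ∂μ
      = ∫ y, (min (y ^ 2) (lam ^ 2) - (y - m) ^ 2 - 2 * clip lam m * (y - m)) ∂μ := by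
        rw [integral_sub hdiff hlin, integral_sub hmin hsq, integral_const_mul, hmean,
          mul_zero, sub_zero]
    _ ≤ ∫ y, (softThresh y lam - m) ^ 2 ∂μ :=
        integral_mono (hdiff.sub hlin) hS
          fun y => min_sq_sub_sq_sub_le_sq_softThresh_sub hlam m y

theorem integral_min_sq_sub_le_integral_sq_softThresh_sub_gaussianReal (β : ℝ) (v : NNReal)
    {lam : ℝ} (hlam : 0 ≤ lam) :
    (∫ y, min (y ^ 2) (lam ^ 2) ∂gaussianReal β v) - v
      ≤ ∫ y, (softThresh y lam - β) ^ 2 ∂gaussianReal β v := by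
  simpa using integral_min_sq_sub_variance_le_integral_sq_softThresh_sub
    (memLp_id_gaussianReal' 2 ENNReal.ofNat_ne_top) hlam

end SoftThresholding

open SoftThresholding in
theorem truncated_second_moment_bias_le_softRisk_general
    (β σ lam : ℝ) (hlam : 0 ≤ lam) :
    (∫ y, min (y^2) (lam^2) ∂(gaussianReal β ⟨σ^2, sq_nonneg σ⟩)) - σ^2
      ≤ ∫ y, (softThresh y lam - β)^2 ∂(gaussianReal β ⟨σ^2, sq_nonneg σ⟩) :=
  integral_min_sq_sub_le_integral_sq_softThresh_sub_gaussianReal β ⟨σ^2, sq_nonneg σ⟩ hlam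

/-- For `Y ~ N(β, σ²)` and `λ ≥ 0`, `E[min{Y², λ²}] − σ² ≤ r_S(λ, β)`,
where `r_S(λ, β) = E[(S(Y, λ) − β)²]` is the soft-thresholding risk. -/
theorem truncated_second_moment_bias_le_softRisk
    (β σ lam : ℝ) (hσ : 0 < σ) (hlam : 0 ≤ lam) :
    (∫ y, min (y^2) (lam^2) ∂(gaussianReal β ⟨σ^2, sq_nonneg σ⟩)) - σ^2
      ≤ ∫ y, (softThresh y lam - β)^2 ∂(gaussianReal β ⟨σ^2, sq_nonneg σ⟩) :=
  truncated_second_moment_bias_le_softRisk_general β σ lam hlam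
end

section
/- Under the orthogonal sparsity model, for any deterministic λₙ the upward bias satisfies E[σ̃²ₙ] − σ² ≤ (n^α/n)·r_S(λₙ, β) + ((n − n^α)/n)·r_S(λₙ, 0), where σ̃²ₙ = (1/n)·Σᵢ min{Yᵢ², λₙ²}. -/
open MeasureTheory ProbabilityTheory Filter Finset

/-- Risk of soft thresholding at a Gaussian mean `b` with noise level `σ`. -/
noncomputable def softRisk (σ lam b : ℝ) : ℝ :=
  ∫ y, (softThresh y lam - b)^2 ∂(gaussianReal b ⟨σ^2, sq_nonneg σ⟩)

/-!
Coordinatewise, `min (y², λ²) = (y - S y)²` for the soft threshold `S = softThresh · λ`.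
Expanding around the mean `b` of `Y`, the cross term `(y - b) (S y - b)` is at least
`(y - b) (S b - b)` because `S` is monotone, and the latter has mean zero. Hence
`E min (Y², λ²) ≤ Var Y + E (S Y - b)²`, which for `Y ~ N(b, σ²)` is `σ² + r_S(λ, b)`.
Averaging over the `⌈n^α⌉` signal and `n - ⌈n^α⌉` null coordinates gives the bound.
-/

section

variable {lam : ℝ}

lemma softThresh_eq_max_add_min (hlam : 0 ≤ lam) (y : ℝ) :
    softThresh y lam = max (y - lam) 0 + min (y + lam) 0 := by
  unfold softThresh
  rcases lt_trichotomy y 0 with hy | rfl | hy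
  · rw [Real.sign_of_neg hy, abs_of_neg hy, max_eq_right (by linarith : y - lam ≤ 0)]
    rcases le_total (y + lam) 0 with h | h
    · rw [max_eq_left (by linarith), min_eq_left h]; ring
    · rw [max_eq_right (by linarith), min_eq_right h]; ring
  · simp [hlam]
  · rw [Real.sign_of_pos hy, abs_of_pos hy, min_eq_right (by linarith : 0 ≤ y + lam)]; ring

lemma monotone_softThresh (hlam : 0 ≤ lam) : Monotone (softThresh · lam) := by
  intro a b hab
  simp only [softThresh_eq_max_add_min hlam]
  gcongr

lemma abs_softThresh_le (hlam : 0 ≤ lam) (y : ℝ) : |softThresh y lam| ≤ |y| := by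
  rw [softThresh_eq_max_add_min hlam, abs_le]
  constructor <;> cases le_total y 0 <;> cases le_total (y - lam) 0 <;>
    cases le_total (y + lam) 0 <;> simp_all [abs_of_nonneg, abs_of_nonpos] <;> linarith

lemma sub_softThresh_sq (hlam : 0 ≤ lam) (y : ℝ) :
    (y - softThresh y lam) ^ 2 = min (y ^ 2) (lam ^ 2) := by
  rw [softThresh_eq_max_add_min hlam]
  rcases le_total (y + lam) 0 with h₁ | h₁
  · rw [max_eq_right (by linarith), min_eq_left h₁, min_eq_right (by nlinarith)]; ring
  rcases le_total (y - lam) 0 with h₂ | h₂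
  · rw [max_eq_right h₂, min_eq_right h₁, min_eq_left (by nlinarith)]; ring
  · rw [max_eq_left h₂, min_eq_right h₁, min_eq_right (by nlinarith)]; ring

lemma min_sq_le_sub_sq_add_softThresh_sub_sq (hlam : 0 ≤ lam) (y b : ℝ) :
    min (y ^ 2) (lam ^ 2)
      ≤ (y - b) ^ 2 - 2 * (softThresh b lam - b) * (y - b) + (softThresh y lam - b) ^ 2 := by
  have hmono : 0 ≤ (y - b) * (softThresh y lam - softThresh b lam) := by
    rcases le_total y b with h | h
    · exact mul_nonneg_of_nonpos_of_nonpos (by linarith)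
        (by linarith [monotone_softThresh hlam h])
    · exact mul_nonneg (by linarith) (by linarith [monotone_softThresh hlam h])
  rw [← sub_softThresh_sq hlam]
  nlinarith

lemma integral_min_sq_le_variance_add (hlam : 0 ≤ lam) {μ : Measure ℝ}
    [IsProbabilityMeasure μ] (hμ : MemLp id 2 μ) :
    ∫ y, min (y ^ 2) (lam ^ 2) ∂μ
      ≤ Var[id; μ] + ∫ y, (softThresh y lam - ∫ x, x ∂μ) ^ 2 ∂μ := by
  set b := ∫ x, x ∂μ
  set c := softThresh b lam - b
  have hS : Measurable (softThresh · lam) := (monotone_softThresh hlam).measurable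
  have hId : Integrable (fun y => y) μ := hμ.integrable one_le_two
  have hY : Integrable (fun y => y - b) μ := hId.sub (integrable_const b)
  have hY2 : Integrable (fun y => (y - b) ^ 2) μ := (hμ.sub (memLp_const b)).integrable_sq
  have hR : Integrable (fun y => (y - b) ^ 2 - 2 * c * (y - b)) μ := hY2.sub (hY.const_mul _)
  have hS2 : Integrable (fun y => (softThresh y lam - b) ^ 2) μ := by
    refine MemLp.integrable_sq (MemLp.sub ?_ (memLp_const b))
    exact hμ.of_le hS.aestronglyMeasurable (ae_of_all _ fun y => abs_softThresh_le hlam y)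
  calc ∫ y, min (y ^ 2) (lam ^ 2) ∂μ
      ≤ ∫ y, ((y - b) ^ 2 - 2 * c * (y - b) + (softThresh y lam - b) ^ 2) ∂μ := by
        refine integral_mono_of_nonneg (ae_of_all _ fun y => by positivity)
          (hR.add hS2) (ae_of_all _ fun y => ?_)
        exact min_sq_le_sub_sq_add_softThresh_sub_sq hlam y b
    _ = Var[id; μ] + ∫ y, (softThresh y lam - b) ^ 2 ∂μ := by
        rw [integral_add hR hS2, integral_sub hY2 (hY.const_mul _),
          integral_const_mul, integral_sub hId (integrable_const b),
          variance_eq_integral measurable_id.aemeasurable]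
        simp [b]

lemma integral_min_sq_gaussianReal_le (hlam : 0 ≤ lam) (b : ℝ) (v : NNReal) :
    ∫ y, min (y ^ 2) (lam ^ 2) ∂gaussianReal b v
      ≤ v + ∫ y, (softThresh y lam - b) ^ 2 ∂gaussianReal b v := by
  simpa [variance_id_gaussianReal, integral_id_gaussianReal] using
    integral_min_sq_le_variance_add hlam (memLp_id_gaussianReal (μ := b) (v := v) 2)

end

lemma sum_fin_ite_lt {M : Type*} [AddCommMonoid M] {m n : ℕ} (h : m ≤ n) (a c : M) :
    ∑ i : Fin n, (if (i : ℕ) < m then a else c) = m • a + (n - m) • c := by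
  rw [Fin.sum_univ_eq_sum_range (fun k => if k < m then a else c), ← sum_range_add_sum_Ico _ h,
    sum_congr rfl fun k hk => if_pos (mem_range.mp hk),
    sum_congr rfl fun k hk => if_neg (not_lt.mpr (mem_Ico.mp hk).1)]
  simp

-- `⟨σ ^ 2, _⟩` is a `Subtype.mk`, which instance search does not unify with `ℝ≥0`
-- at instance transparency, so the general Gaussian instance is not found for it.
instance isProbabilityMeasure_gaussianReal_sq (b σ : ℝ) :
    IsProbabilityMeasure (gaussianReal b ⟨σ ^ 2, sq_nonneg σ⟩) :=
  instIsProbabilityMeasureGaussianReal _ _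

instance isProbabilityMeasure_orthoModel (β σ α : ℝ) (n : ℕ) :
    IsProbabilityMeasure (orthoModel β σ α n) := by
  unfold orthoModel; infer_instance

lemma integral_comp_eval_orthoModel (β σ α : ℝ) {n : ℕ} (i : Fin n) {f : ℝ → ℝ}
    (hf : Measurable f) :
    ∫ y, f (y i) ∂orthoModel β σ α n
      = ∫ x, f x ∂gaussianReal (if (i : ℕ) < ⌈(n : ℝ) ^ α⌉₊ then β else 0)
          ⟨σ ^ 2, sq_nonneg σ⟩ :=
  integral_comp_eval hf.aestronglyMeasurable

theorem upward_bias_le_weighted_softRisk_general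
    (β σ α : ℝ) (hα1 : α < 1)
    (n : ℕ) (hn : 0 < n) (lam : ℝ) (hlam : 0 ≤ lam) :
    (∫ y, (1 / (n : ℝ)) * ∑ i : Fin n, min ((y i)^2) (lam^2)
        ∂(orthoModel β σ α n)) - σ^2
      ≤ ((⌈(n : ℝ)^α⌉₊ : ℝ) / n) * softRisk σ lam β
        + (((n : ℝ) - (⌈(n : ℝ)^α⌉₊ : ℝ)) / n) * softRisk σ lam 0 := by
  set m := ⌈(n : ℝ) ^ α⌉₊
  have hmn : m ≤ n := Nat.ceil_le.mpr <| by
    simpa using Real.rpow_le_rpow_of_exponent_le (by exact_mod_cast hn : (1 : ℝ) ≤ n) hα1.le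
  have hcoord (i : Fin n) : ∫ y, min ((y i) ^ 2) (lam ^ 2) ∂orthoModel β σ α n
      ≤ σ ^ 2 + softRisk σ lam (if (i : ℕ) < m then β else 0) :=
    (integral_comp_eval_orthoModel β σ α i (by fun_prop)).trans_le
      (integral_min_sq_gaussianReal_le hlam _ ⟨σ ^ 2, sq_nonneg σ⟩)
  have hint (i : Fin n) : Integrable (fun y : Fin n → ℝ => min ((y i) ^ 2) (lam ^ 2))
      (orthoModel β σ α n) :=
    Integrable.of_bound (Measurable.aestronglyMeasurable (by fun_prop)) (lam ^ 2) <|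
      ae_of_all _ fun y => by rw [Real.norm_of_nonneg (by positivity)]; exact min_le_right _ _
  calc _ ≤ 1 / (n : ℝ) * ∑ i : Fin n,
          (σ ^ 2 + softRisk σ lam (if (i : ℕ) < m then β else 0)) - σ ^ 2 := by
        rw [integral_const_mul, integral_finsetSum _ fun i _ => hint i]
        gcongr with i
        exact hcoord i
    _ = _ := by
        simp only [sum_add_distrib, apply_ite (softRisk σ lam), sum_fin_ite_lt hmn, sum_const,
          card_univ, Fintype.card_fin, nsmul_eq_mul, Nat.cast_sub hmn]
        field_simp
        ring

/-- Under the orthogonal sparsity model, for any deterministic threshold `λₙ`, the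
upward bias of `σ̃²ₙ = (1/n) Σᵢ min{Yᵢ², λₙ²}` is bounded by the weighted risks:
`E[σ̃²ₙ] − σ² ≤ (⌈n^α⌉/n) r_S(λₙ, β) + ((n − ⌈n^α⌉)/n) r_S(λₙ, 0)`. -/
theorem upward_bias_le_weighted_softRisk
    (β σ α : ℝ) (hσ : 0 < σ) (hα0 : 0 ≤ α) (hα1 : α < 1)
    (n : ℕ) (hn : 0 < n) (lam : ℝ) (hlam : 0 ≤ lam) :
    (∫ y, (1 / (n : ℝ)) * ∑ i : Fin n, min ((y i)^2) (lam^2)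
        ∂(orthoModel β σ α n)) - σ^2
      ≤ ((⌈(n : ℝ)^α⌉₊ : ℝ) / n) * softRisk σ lam β
        + (((n : ℝ) - (⌈(n : ℝ)^α⌉₊ : ℝ)) / n) * softRisk σ lam 0 :=
  upward_bias_le_weighted_softRisk_general β σ α hα1 n hn lam hlam
end

section
/- Under the orthogonal sparsity model with λₙ → ∞, n·Var[σ̃²ₙ] → 2σ⁴, where σ̃²ₙ = (1/n)·Σᵢ min{Yᵢ², λₙ²}. -/
open MeasureTheory ProbabilityTheory Filter Finset

/-!
The coordinates are independent, so `n · Var σ̃²ₙ` is the average of the `n` coordinate variances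
`Var[min(Yᵢ², λₙ²)]`. Since `λₙ → ∞`, dominated convergence makes each of them converge to the
untruncated `Var[Yᵢ²]`. At most `⌈n^α⌉ = o(n)` coordinates carry the signal `β`, so they contribute
`o(1)`, and the average tends to `Var[Z²] = E Z⁴ - (E Z²)² = 3σ⁴ - σ⁴` for `Z ~ N(0, σ²)`.
-/

open Real
open scoped NNReal Nat Topology

lemma integral_even_pow_mul_exp_neg_mul_sq {b : ℝ} (hb : 0 < b) (k : ℕ) :
    ∫ x : ℝ, x ^ (2 * k) * exp (-b * x ^ 2) = b ^ (-(k + 1 / 2 : ℝ)) * Gamma (k + 1 / 2) := by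
  have h_abs : ∀ x : ℝ, x ^ (2 * k) * exp (-b * x ^ 2)
      = (fun y : ℝ => y ^ (2 * k) * exp (-b * y ^ 2)) |x| := by
    intro x
    simp only [pow_mul, sq_abs]
  have h_rpow : ∫ x in Set.Ioi (0 : ℝ), x ^ (2 * k) * exp (-b * x ^ 2)
      = ∫ x in Set.Ioi (0 : ℝ), x ^ ((2 * k : ℕ) : ℝ) * exp (-b * x ^ (2 : ℝ)) := by
    refine setIntegral_congr_fun measurableSet_Ioi fun x _ => ?_
    rw [rpow_natCast, rpow_two]
  rw [integral_congr_ae (ae_of_all _ h_abs),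
    integral_comp_abs (f := fun y : ℝ => y ^ (2 * k) * exp (-b * y ^ 2)), h_rpow,
    integral_rpow_mul_exp_neg_mul_rpow two_pos
    (neg_one_lt_zero.trans_le (Nat.cast_nonneg _)) hb]
  have : (((2 * k : ℕ) : ℝ) + 1) / 2 = k + 1 / 2 := by push_cast; ring
  rw [this, neg_div, this]
  ring

lemma integral_even_pow_gaussianReal_zero (v : ℝ≥0) (k : ℕ) :
    ∫ x, x ^ (2 * k) ∂gaussianReal 0 v = v ^ k * (2 * k - 1 : ℕ)‼ := by
  rcases eq_or_ne v 0 with rfl | hv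
  · cases k <;> simp [gaussianReal_zero_var]
  have h_pdf : ∀ x, gaussianPDFReal 0 v x • x ^ (2 * k)
      = (√(2 * π * v))⁻¹ * (x ^ (2 * k) * exp (-(2 * v : ℝ)⁻¹ * x ^ 2)) := by
    intro x
    rw [gaussianPDFReal, smul_eq_mul, sub_zero, neg_div, div_eq_inv_mul, neg_mul]
    ring
  rw [integral_gaussianReal_eq_integral_smul hv, integral_congr_ae (ae_of_all _ h_pdf),
    integral_const_mul, integral_even_pow_mul_exp_neg_mul_sq (by positivity),
    Gamma_nat_add_half, inv_rpow (by positivity), ← rpow_neg (by positivity), neg_neg,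
    rpow_add (by positivity), rpow_natCast, ← sqrt_eq_rpow]
  have h_sqrt : √(2 * π * v) = √2 * √π * √v := by
    rw [sqrt_mul (by positivity), sqrt_mul (by positivity)]
  rw [h_sqrt, sqrt_mul zero_le_two]
  field_simp
  ring

lemma memLp_sq_gaussianReal (μ : ℝ) (v : ℝ≥0) :
    MemLp (fun x => x ^ 2) 2 (gaussianReal μ v) := by
  refine (memLp_two_iff_integrable_sq (by fun_prop)).2 <|
    ((memLp_id_gaussianReal 4).integrable_norm_pow (by norm_num)).congr (ae_of_all _ fun x => ?_)
  simpa [← pow_mul] using Even.pow_abs ⟨2, rfl⟩ x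

lemma variance_sq_gaussianReal_zero (v : ℝ≥0) :
    Var[fun x => x ^ 2; gaussianReal 0 v] = 2 * (v : ℝ) ^ 2 := by
  rw [variance_eq_sub (memLp_sq_gaussianReal 0 v)]
  have h2 := integral_even_pow_gaussianReal_zero v 1
  have h4 := integral_even_pow_gaussianReal_zero v 2
  simp only [Pi.pow_apply, ← pow_mul]
  norm_num at h2 h4 ⊢
  rw [h2, h4]
  ring

lemma abs_min_le_abs {x c : ℝ} (hc : 0 ≤ c) : |min x c| ≤ |x| := by
  rcases le_total x c with h | h
  · rw [min_eq_left h]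
  · rw [min_eq_right h, abs_of_nonneg hc]
    exact h.trans (le_abs_self x)

section Truncation

variable {Ω ι : Type*} [MeasurableSpace Ω] {μ : Measure Ω} {l : Filter ι}

lemma tendsto_integral_of_abs_le_of_eventually_eq [l.IsCountablyGenerated]
    {F : ι → Ω → ℝ} {f : Ω → ℝ} (hf : Integrable f μ)
    (hF_meas : ∀ᶠ i in l, AEStronglyMeasurable (F i) μ)
    (hF_le : ∀ᶠ i in l, ∀ ω, |F i ω| ≤ |f ω|) (hF_eq : ∀ ω, ∀ᶠ i in l, F i ω = f ω) :
    Tendsto (fun i => ∫ ω, F i ω ∂μ) l (𝓝 (∫ ω, f ω ∂μ)) :=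
  tendsto_integral_filter_of_dominated_convergence (fun ω => |f ω|) hF_meas
    (hF_le.mono fun _ h => ae_of_all _ h) hf.abs
    (ae_of_all _ fun ω => tendsto_const_nhds.congr' ((hF_eq ω).mono fun _ h => h.symm))

lemma tendsto_variance_min_of_tendsto_atTop [IsProbabilityMeasure μ] [l.IsCountablyGenerated]
    {X : Ω → ℝ} (hX : MemLp X 2 μ) {c : ι → ℝ} (hc : Tendsto c l atTop) :
    Tendsto (fun i => Var[fun ω => min (X ω) (c i); μ]) l (𝓝 Var[X; μ]) := by
  have h_meas : ∀ i, AEStronglyMeasurable (fun ω => min (X ω) (c i)) μ := fun i =>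
    (hX.aestronglyMeasurable.aemeasurable.min aemeasurable_const).aestronglyMeasurable
  have h_eq : ∀ ω, ∀ᶠ i in l, min (X ω) (c i) = X ω := fun ω =>
    (hc.eventually_ge_atTop (X ω)).mono fun _ h => min_eq_left h
  have h_le : ∀ᶠ i in l, ∀ ω, |min (X ω) (c i)| ≤ |X ω| :=
    (hc.eventually_ge_atTop 0).mono fun _ h _ => abs_min_le_abs h
  have h_mean := tendsto_integral_of_abs_le_of_eventually_eq (hX.integrable one_le_two)
    (.of_forall h_meas) h_le h_eq
  have h_sq := tendsto_integral_of_abs_le_of_eventually_eq (F := fun i ω => min (X ω) (c i) ^ 2)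
    ((memLp_two_iff_integrable_sq hX.aestronglyMeasurable).1 hX)
    (.of_forall fun i => (h_meas i).pow 2)
    (h_le.mono fun _ h ω => by simpa only [abs_pow] using pow_le_pow_left₀ (abs_nonneg _) (h ω) 2)
    (fun ω => (h_eq ω).mono fun _ h => by rw [h])
  rw [variance_eq_sub hX]
  refine (h_sq.sub (h_mean.pow 2)).congr' ?_
  filter_upwards [hc.eventually_ge_atTop 0] with i hi
  have h_memLp : MemLp (fun ω => min (X ω) (c i)) 2 μ :=
    hX.of_le (h_meas i) (ae_of_all _ fun ω => by
      simpa only [Real.norm_eq_abs] using abs_min_le_abs hi)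
  rw [variance_eq_sub h_memLp]
  rfl

end Truncation

lemma tendsto_min_ceil_rpow_div_nhds_zero {α : ℝ} (hα : α < 1) :
    Tendsto (fun n : ℕ => (min n ⌈(n : ℝ) ^ α⌉₊ : ℕ) / (n : ℝ)) atTop (𝓝 0) := by
  have h_bound : Tendsto (fun n : ℕ => (n : ℝ) ^ (α - 1) + (n : ℝ)⁻¹) atTop (𝓝 0) := by
    have h_rpow := (tendsto_rpow_neg_atTop (sub_pos.2 hα)).comp tendsto_natCast_atTop_atTop
    simpa [Function.comp_def] using h_rpow.add tendsto_inv_atTop_nhds_zero_nat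
  refine squeeze_zero' (.of_forall fun n => by positivity) ?_ h_bound
  filter_upwards [eventually_gt_atTop 0] with n hn
  have hn' : (0 : ℝ) < n := Nat.cast_pos.2 hn
  calc ((min n ⌈(n : ℝ) ^ α⌉₊ : ℕ) : ℝ) / n ≤ ((n : ℝ) ^ α + 1) / n := by
        gcongr
        exact (Nat.cast_le.2 (min_le_right _ _)).trans
          (Nat.ceil_lt_add_one (by positivity)).le
    _ = (n : ℝ) ^ (α - 1) + (n : ℝ)⁻¹ := by
        rw [rpow_sub_one hn'.ne', add_div, one_div]

lemma variance_const_mul_sum_pi {ι : Type*} [Fintype ι] {Ω : ι → Type*}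
    {mΩ : ∀ i, MeasurableSpace (Ω i)} {μ : (i : ι) → Measure (Ω i)}
    [∀ i, IsProbabilityMeasure (μ i)] {X : Π i, Ω i → ℝ} (hX : ∀ i, MemLp (X i) 2 (μ i)) (c : ℝ) :
    Var[fun ω => c * ∑ i, X i (ω i); Measure.pi μ] = c ^ 2 * ∑ i, Var[X i; μ i] := by
  have h_sum : (fun ω : Π i, Ω i => ∑ i, X i (ω i)) = ∑ i, fun ω => X i (ω i) := by
    ext ω; simp
  rw [variance_const_mul, h_sum, variance_sum_pi hX]

lemma n_mul_variance_pi_gaussianReal_ite {n : ℕ} (hn : n ≠ 0) (K : ℕ) (β : ℝ) (v : ℝ≥0)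
    {g : ℝ → ℝ} (hg : ∀ a, MemLp g 2 (gaussianReal a v)) :
    n * Var[fun y => (1 / (n : ℝ)) * ∑ i, g (y i);
        Measure.pi fun i : Fin n => gaussianReal (if (i : ℕ) < K then β else 0) v]
      = (min n K : ℕ) / (n : ℝ) * Var[g; gaussianReal β v]
        + (1 - (min n K : ℕ) / (n : ℝ)) * Var[g; gaussianReal 0 v] := by
  rw [variance_const_mul_sum_pi fun i => hg _]
  simp only [apply_ite (fun m => Var[g; gaussianReal m v]), sum_ite, sum_const, nsmul_eq_mul,
    Fin.card_filter_val_lt]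
  have h_card := card_filter_add_card_filter_not (s := univ) (p := fun i : Fin n => (i : ℕ) < K)
  rw [Fin.card_filter_val_lt, card_univ, Fintype.card_fin] at h_card
  have h_compl : (#{i : Fin n | ¬ (i : ℕ) < K} : ℝ) = n - (min n K : ℕ) := by
    rw [eq_sub_iff_add_eq']
    exact_mod_cast h_card
  rw [h_compl]
  field_simp

theorem n_mul_variance_tendsto_general
    (β σ α : ℝ) (hα1 : α < 1)
    (lam : ℕ → ℝ) (hlam : Tendsto lam atTop atTop) :
    Tendsto
      (fun (n : ℕ) => (n : ℝ) * variance (fun (y : Fin n → ℝ) =>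
        (1 / (n : ℝ)) * ∑ i : Fin n, min ((y i)^2) ((lam n)^2)) (orthoModel β σ α n))
      atTop (nhds (2 * σ^4)) := by
  set v : ℝ≥0 := ⟨σ ^ 2, sq_nonneg σ⟩
  have h_memLp : ∀ n a, MemLp (fun x => min (x ^ 2) (lam n ^ 2)) 2 (gaussianReal a v) :=
    fun n a => (memLp_sq_gaussianReal a v).of_le (by fun_prop) (ae_of_all _ fun x => by
      simpa only [Real.norm_eq_abs] using abs_min_le_abs (sq_nonneg (lam n)))
  have h_var : ∀ a, Tendsto (fun n => Var[fun x => min (x ^ 2) (lam n ^ 2); gaussianReal a v])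
      atTop (𝓝 Var[fun x => x ^ 2; gaussianReal a v]) :=
    fun a => tendsto_variance_min_of_tendsto_atTop (memLp_sq_gaussianReal a v)
      ((tendsto_pow_atTop two_ne_zero).comp hlam)
  have h_frac := tendsto_min_ceil_rpow_div_nhds_zero hα1
  have h_lim :=
    (h_frac.mul (h_var β)).add (((tendsto_const_nhds (x := 1)).sub h_frac).mul (h_var 0))
  have h_v : (v : ℝ) ^ 2 = σ ^ 4 := by rw [show (v : ℝ) = σ ^ 2 from rfl, ← pow_mul]
  rw [variance_sq_gaussianReal_zero, h_v, zero_mul, zero_add, sub_zero, one_mul] at h_lim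
  refine h_lim.congr' ?_
  filter_upwards [eventually_ne_atTop 0] with n hn
  exact (n_mul_variance_pi_gaussianReal_ite hn _ β v (h_memLp n)).symm

/-- Under the orthogonal sparsity model with `λₙ → ∞`,
`n · Var[σ̃²ₙ] → 2σ⁴`, where `σ̃²ₙ = (1/n) Σᵢ min{Yᵢ², λₙ²}`. -/
theorem n_mul_variance_tendsto
    (β σ α : ℝ) (hσ : 0 < σ) (hα0 : 0 ≤ α) (hα1 : α < 1)
    (lam : ℕ → ℝ) (hlam : Tendsto lam atTop atTop) :
    Tendsto
      (fun (n : ℕ) => (n : ℝ) * variance (fun (y : Fin n → ℝ) =>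
        (1 / (n : ℝ)) * ∑ i : Fin n, min ((y i)^2) ((lam n)^2)) (orthoModel β σ α n))
      atTop (nhds (2 * σ^4)) :=
  n_mul_variance_tendsto_general β σ α hα1 lam hlam
end
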